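/- arXiv:1310.6830 — 2 statements merged into one kernel-verified Lean document; each statement's English description precedes it below -/
import Mathlib

section
/- For every n ≥ 2 there exists a monic centered polynomial p of degree n over ℂ having n−1 pairwise distinct attracting fixed points; that is, there exist distinct points z_1, …, z_{n-1} ∈ ℂ with p(z_j) = z_j and |p'(z_j)| < 1 for every j. -/
/-!
For `n = m + 1 ≥ 3` take `p = X ^ (m + 1) + c X` with `c = (m + 1) / m`. Its nonzero fixed points
are the `m` distinct `m`-th roots of `1 - c = -1 / m`, and at each of them
`p' = (m + 1) z ^ m + c = -(m + 1) / m + (m + 1) / m = 0`, so they are superattracting.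
For `n = 2` the linear term would spoil centering, and `X ^ 2` with its fixed point `0` does the
job instead.
-/

open Polynomial Function

namespace Polynomial

variable {R : Type*} [CommRing R]

theorem monic_X_pow_add_C_mul_X {n : ℕ} (hn : 1 < n) (c : R) : (X ^ n + C c * X).Monic :=
  monic_X_pow_add ((degree_C_mul_X_le c).trans_lt (by exact_mod_cast hn))

theorem natDegree_X_pow_add_C_mul_X [Nontrivial R] {n : ℕ} (hn : 1 < n) (c : R) :
    (X ^ n + C c * X).natDegree = n := by
  rw [natDegree_add_eq_left_of_degree_lt, natDegree_X_pow]
  exact (degree_C_mul_X_le c).trans_lt (by rw [degree_X_pow]; exact_mod_cast hn)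

theorem coeff_X_pow_add_C_mul_X_pred {n : ℕ} (hn : 2 < n) (c : R) :
    (X ^ n + C c * X).coeff (n - 1) = 0 := by
  simp only [coeff_add, coeff_X_pow, coeff_C_mul, coeff_X]
  rw [if_neg (by omega), if_neg (by omega), mul_zero, add_zero]

theorem eval_X_pow_succ_add_C_mul_X {m : ℕ} {c z : R} (hz : z ^ m = 1 - c) :
    (X ^ (m + 1) + C c * X).eval z = z := by
  simp only [eval_add, eval_pow, eval_mul, eval_C, eval_X, pow_succ, hz]
  ring

theorem eval_derivative_X_pow_succ_add_C_mul_X (m : ℕ) (c z : R) :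
    (X ^ (m + 1) + C c * X).derivative.eval z = (m + 1) * z ^ m + c := by
  simp

end Polynomial

theorem exists_injective_fin_pow_eq {K : Type*} [Field K] [IsSepClosed K] (m : ℕ)
    [NeZero (m : K)] {a : K} (ha : a ≠ 0) : ∃ z : Fin m → K, Injective z ∧ ∀ j, z j ^ m = a := by
  obtain ⟨α, hα⟩ := IsSepClosed.exists_pow_nat_eq a m
  obtain ⟨ζ, hζ⟩ := HasEnoughRootsOfUnity.exists_primitiveRoot K m
  have hm : m ≠ 0 := fun h => NeZero.ne (m : K) (by simp [h])
  have hα0 : α ≠ 0 := by rintro rfl; exact ha (by rw [← hα, zero_pow hm])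
  refine ⟨fun j => ζ ^ (j : ℕ) * α, fun i j hij => Fin.ext ?_, fun j => ?_⟩
  · exact hζ.injOn_pow_mul hα0 (by simp) (by simp) hij
  · rw [mul_pow, ← pow_mul, pow_mul', hζ.pow_eq_one, one_pow, one_mul, hα]

theorem exists_injective_superattracting_fixedPts {K : Type*} [Field K] [IsSepClosed K] (m : ℕ)
    [NeZero (m : K)] :
    ∃ z : Fin m → K, Injective z ∧ ∀ j,
      (X ^ (m + 1) + C ((m + 1) / m : K) * X).eval (z j) = z j ∧
      (X ^ (m + 1) + C ((m + 1) / m : K) * X).derivative.eval (z j) = 0 := by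
  have hm : (m : K) ≠ 0 := NeZero.ne _
  have hroot : (1 - (m + 1) / m : K) = -1 / m := by field_simp; ring
  obtain ⟨z, hz, hzm⟩ := exists_injective_fin_pow_eq m (a := (-1 / m : K)) (by simp [hm])
  refine ⟨z, hz, fun j => ⟨eval_X_pow_succ_add_C_mul_X (by rw [hzm, hroot]), ?_⟩⟩
  rw [eval_derivative_X_pow_succ_add_C_mul_X, hzm]
  field_simp
  ring

/-- For every `n ≥ 2` there exists a monic centered polynomial `p` of degree
`n` over `ℂ` having `n-1` pairwise distinct attracting fixed points. -/
theorem exists_poly_with_attracting_fixed_points (n : ℕ) (hn : 2 ≤ n) :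
    ∃ (p : Polynomial ℂ) (z : Fin (n - 1) → ℂ),
      p.Monic ∧ p.natDegree = n ∧ p.coeff (n - 1) = 0 ∧
      Function.Injective z ∧
      (∀ j, p.eval (z j) = z j) ∧
      (∀ j, ‖p.derivative.eval (z j)‖ < 1) := by
  obtain rfl | hn := hn.eq_or_lt
  · exact ⟨X ^ 2, fun _ => 0, monic_X_pow 2, natDegree_X_pow 2, by simp,
      injective_of_subsingleton (α := Fin 1) _, by simp, by simp⟩
  obtain ⟨m, rfl⟩ : ∃ m, n = m + 1 := ⟨n - 1, by omega⟩
  have : NeZero (m : ℂ) := ⟨Nat.cast_ne_zero.2 (by omega)⟩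
  obtain ⟨z, hz, hfix⟩ := exists_injective_superattracting_fixedPts (K := ℂ) m
  exact ⟨_, z, monic_X_pow_add_C_mul_X (by omega) _, natDegree_X_pow_add_C_mul_X (by omega) _,
    coeff_X_pow_add_C_mul_X_pred hn _, hz, fun j => (hfix j).1,
    fun j => by rw [(hfix j).2, norm_zero]; exact one_pos⟩
end

section
/- For a ∈ 𝔻, let μ_a(z) = ((1 − conj(a))/(1 − a)) · (z² − a z)/(1 − conj(a) z). Then the map a ↦ μ_a'(0) = (|a|² − a)/(1 − a) is a bijection of 𝔻 onto 𝔻, with inverse given explicitly by λ ↦ (|λ|² − λ)/(1 − λ); that is, for every a ∈ 𝔻 one has a = (|μ_a'(0)|² − μ_a'(0))/(1 − μ_a'(0)), and every λ ∈ 𝔻 equals μ_a'(0) for exactly one a ∈ 𝔻. -/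
/-!
Writing `|a|² = a · conj a` gives `μ_a'(0) = a · conj (a - 1) / (1 - a)`, which is `a` times a
unimodular factor. Hence `λ ↦ (|λ|² - λ)/(1 - λ)` preserves `|λ|`, and substituting
`|λ|² = |a|²` shows that it is an involution of the disk.
-/

/-- The Blaschke-type quadratic map `μ_a(z) = ((1 - conj a)/(1 - a)) · (z² - a z)/(1 - conj a · z)`. -/
noncomputable def mu (a : ℂ) (z : ℂ) : ℂ :=
  ((1 - starRingEnd ℂ a) / (1 - a)) * ((z ^ 2 - a * z) / (1 - starRingEnd ℂ a * z))

open ComplexConjugate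

noncomputable def muDeriv (a : ℂ) : ℂ := ((‖a‖ : ℂ) ^ 2 - a) / (1 - a)

lemma muDeriv_eq_mul (a : ℂ) : muDeriv a = a * ((conj a - 1) / (1 - a)) := by
  rw [muDeriv, ← Complex.mul_conj']
  ring

lemma norm_muDeriv {a : ℂ} (ha : a ≠ 1) : ‖muDeriv a‖ = ‖a‖ := by
  have h1 : 1 - a ≠ 0 := sub_ne_zero.mpr ha.symm
  have hconj : conj a - 1 = conj (a - 1) := by simp
  rw [muDeriv_eq_mul, norm_mul, norm_div, hconj, Complex.norm_conj, norm_sub_rev,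
    div_self (norm_ne_zero_iff.mpr h1), mul_one]

lemma one_sub_muDeriv {a : ℂ} (ha : a ≠ 1) :
    1 - muDeriv a = (1 - (‖a‖ : ℂ) ^ 2) / (1 - a) := by
  rw [muDeriv, one_sub_div (sub_ne_zero.mpr ha.symm), sub_sub_sub_cancel_right]

lemma muDeriv_muDeriv {a : ℂ} (ha : ‖a‖ ≠ 1) : muDeriv (muDeriv a) = a := by
  have ha1 : a ≠ 1 := by rintro rfl; simp at ha
  have h1 : 1 - a ≠ 0 := sub_ne_zero.mpr ha1.symm
  have h2 : 1 - (‖a‖ : ℂ) ^ 2 ≠ 0 := by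
    norm_cast
    exact sub_ne_zero.mpr fun h => ha (by nlinarith [norm_nonneg a])
  have h3 : 1 - muDeriv a ≠ 0 := by
    rw [one_sub_muDeriv ha1]
    exact div_ne_zero h2 h1
  rw [muDeriv, norm_muDeriv ha1, div_eq_iff h3, muDeriv]
  field_simp
  ring

lemma mapsTo_muDeriv : Set.MapsTo muDeriv {z : ℂ | ‖z‖ < 1} {z : ℂ | ‖z‖ < 1} :=
  fun a (ha : ‖a‖ < 1) => show ‖muDeriv a‖ < 1 by
    rwa [norm_muDeriv (by rintro rfl; simp at ha)]

lemma bijOn_muDeriv : Set.BijOn muDeriv {z : ℂ | ‖z‖ < 1} {z : ℂ | ‖z‖ < 1} :=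
  Set.InvOn.bijOn ⟨fun _ ha => muDeriv_muDeriv ha.ne, fun _ ha => muDeriv_muDeriv ha.ne⟩
    mapsTo_muDeriv mapsTo_muDeriv

lemma hasDerivAt_mu_zero (a : ℂ) : HasDerivAt (mu a) (muDeriv a) 0 := by
  have hnum : HasDerivAt (fun z : ℂ => z ^ 2 - a * z) (2 * 0 ^ 1 - a * 1) 0 :=
    (hasDerivAt_pow 2 0).sub ((hasDerivAt_id 0).const_mul a)
  have hden : HasDerivAt (fun z : ℂ => 1 - conj a * z) (0 - conj a * 1) 0 :=
    (hasDerivAt_const 0 1).sub ((hasDerivAt_id 0).const_mul (conj a))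
  refine ((hnum.div hden (by simp)).const_mul ((1 - conj a) / (1 - a))).congr_deriv ?_
  rw [muDeriv_eq_mul]
  ring

/-- The map `a ↦ μ_a'(0) = (|a|² - a)/(1 - a)` is a bijection of the unit disk
`𝔻` onto itself, with inverse given by the same formula `λ ↦ (|λ|² - λ)/(1 - λ)`: for every
`a ∈ 𝔻`, `a = (|μ_a'(0)|² - μ_a'(0))/(1 - μ_a'(0))`, and every `λ ∈ 𝔻` equals `μ_a'(0)` for
exactly one `a ∈ 𝔻`. -/
theorem deriv_mu_at_zero_bijective :
    (∀ a : ℂ, ‖a‖ < 1 →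
      deriv (mu a) 0 = ((‖a‖ : ℂ) ^ 2 - a) / (1 - a)) ∧
    Set.BijOn (fun a : ℂ => ((‖a‖ : ℂ) ^ 2 - a) / (1 - a))
      {z : ℂ | ‖z‖ < 1} {z : ℂ | ‖z‖ < 1} ∧
    (∀ a : ℂ, ‖a‖ < 1 →
      a = ((‖deriv (mu a) 0‖ : ℂ) ^ 2 - deriv (mu a) 0) / (1 - deriv (mu a) 0)) ∧
    (∀ lam : ℂ, ‖lam‖ < 1 →
      ∃! a : ℂ, ‖a‖ < 1 ∧ deriv (mu a) 0 = lam) := by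
  have hderiv (a : ℂ) : deriv (mu a) 0 = muDeriv a := (hasDerivAt_mu_zero a).deriv
  refine ⟨fun a _ => hderiv a, bijOn_muDeriv, fun a ha => ?_, fun lam hlam => ?_⟩
  · rw [hderiv]
    exact (muDeriv_muDeriv ha.ne).symm
  · simp only [hderiv]
    refine ⟨muDeriv lam, ⟨mapsTo_muDeriv hlam, muDeriv_muDeriv hlam.ne⟩, ?_⟩
    rintro b ⟨hb, rfl⟩
    exact (muDeriv_muDeriv hb.ne).symm
end
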